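/- arXiv:2509.02487 — 2 statements merged into one kernel-verified Lean document; each statement's English description precedes it below -/
import Mathlib

section
/- Let A ⊂ S^n be star-shaped on S^n with center g ∈ σ(A) lying in the interior A° of A, where -g ∉ A. Then for every x on the boundary ∂A, the geodesic G(x, -g) connecting x to -g does not intersect the interior A°. -/
open scoped RealInnerProductSpace Classical

variable {n : ℕ}

/-- The unit `n`-sphere in `ℝ^{n+1}`. -/
noncomputable def unitSphere (n : ℕ) : Set (EuclideanSpace ℝ (Fin (n + 1))) :=
  Metric.sphere (0 : EuclideanSpace ℝ (Fin (n + 1))) 1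

/-- The (unique, minimizing) geodesic on `Sⁿ` connecting `a` and `b` (for `a ≠ -b`),
given by `g(λ) = (sin((1-λ)θ) a + sin(λθ) b)/sin θ`, `λ ∈ [0,1]`, `θ = arccos(aᵀb)`;
for `a = b` it is the singleton `{a}`. -/

noncomputable def sphGeodesic (a b : EuclideanSpace ℝ (Fin (n + 1))) :
    Set (EuclideanSpace ℝ (Fin (n + 1))) :=
  if a = b then {a}
  else
    {x | ∃ l ∈ Set.Icc (0 : ℝ) 1,
      x = (Real.sin ((1 - l) * Real.arccos ⟪a, b⟫) / Real.sin (Real.arccos ⟪a, b⟫)) • a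
        + (Real.sin (l * Real.arccos ⟪a, b⟫) / Real.sin (Real.arccos ⟪a, b⟫)) • b}

/-- The interior of `A` relative to the sphere `Sⁿ`. -/
def sphInterior (n : ℕ) (A : Set (EuclideanSpace ℝ (Fin (n + 1)))) :
    Set (EuclideanSpace ℝ (Fin (n + 1))) :=
  {x | x ∈ unitSphere n ∧ ∃ U : Set (EuclideanSpace ℝ (Fin (n + 1))),
    IsOpen U ∧ x ∈ U ∧ U ∩ unitSphere n ⊆ A}

/-- The boundary of `A` relative to the sphere `Sⁿ` (closure minus interior on `Sⁿ`). -/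
def sphBoundary (n : ℕ) (A : Set (EuclideanSpace ℝ (Fin (n + 1)))) :
    Set (EuclideanSpace ℝ (Fin (n + 1))) :=
  (closure A ∩ unitSphere n) \ sphInterior n A

/-!
Write points of the sphere in polar coordinates around `g`: `w = cos a • g + sin a • u` with
`a = arccos ⟪g, w⟫` and `u` a unit vector orthogonal to `g`. The geodesic from `x` (at angle `α`)
to `-g` continues the great circle from `g` through `x`, so each of its points is the point at
some angle `β ∈ [α, π]` in the direction of `x`. Suppose such a point `y` is interior. The cases
`β = α` and `β = π` are excluded by `x ∉ A°` and `-g ∉ A`. Otherwise, for `w` on the sphere near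
`x`, the point at angle `β` in the direction of `w` stays near `y`, hence in `A`, and `w` lies on
the geodesic from `g` to it; star-shapedness puts `w` in `A`, so `x` would be interior.
-/

open Real

section PolarCoordinates

variable {E : Type*} [NormedAddCommGroup E] [InnerProductSpace ℝ E] {g u w : E}

def perpPart (g w : E) : E := w - ⟪g, w⟫ • g

noncomputable def polarDir (g w : E) : E := ‖perpPart g w‖⁻¹ • perpPart g w

noncomputable def greatCircle (g u : E) (t : ℝ) : E := cos t • g + sin t • u

lemma continuous_perpPart : Continuous (perpPart g) := by
  unfold perpPart; fun_prop

lemma continuousAt_polarDir (h : perpPart g w ≠ 0) : ContinuousAt (polarDir g) w :=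
  (continuous_perpPart.norm.continuousAt.inv₀ (norm_ne_zero_iff.2 h)).smul
    continuous_perpPart.continuousAt

lemma norm_polarDir (h : perpPart g w ≠ 0) : ‖polarDir g w‖ = 1 := by
  rw [polarDir, norm_smul, norm_inv, norm_norm, inv_mul_cancel₀ (norm_ne_zero_iff.2 h)]

lemma greatCircle_pi : greatCircle g u π = -g := by
  simp [greatCircle]

variable (hg : ‖g‖ = 1)
include hg

lemma inner_perpPart : ⟪g, perpPart g w⟫ = 0 := by
  simp [perpPart, inner_sub_right, real_inner_smul_right, hg]

lemma norm_perpPart_sq (hw : ‖w‖ = 1) : ‖perpPart g w‖ ^ 2 = 1 - ⟪g, w⟫ ^ 2 := by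
  rw [perpPart, norm_sub_sq_real, real_inner_smul_right, norm_smul, hw, real_inner_comm w g,
    hg, Real.norm_eq_abs, mul_pow, sq_abs]
  ring

lemma inner_polarDir : ⟪g, polarDir g w⟫ = 0 := by
  rw [polarDir, real_inner_smul_right, inner_perpPart hg, mul_zero]

lemma perpPart_ne_zero (hw : ‖w‖ = 1) (hwg : w ≠ g) (hwg' : w ≠ -g) : perpPart g w ≠ 0 := by
  intro h
  have hsq : ⟪g, w⟫ ^ 2 = 1 := by
    have := norm_perpPart_sq hg hw
    rw [h, norm_zero] at this
    linarith
  have hw' : w = ⟪g, w⟫ • g := sub_eq_zero.1 h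
  rcases sq_eq_one_iff.1 hsq with h1 | h1
  · exact hwg (by rw [hw', h1, one_smul])
  · exact hwg' (by rw [hw', h1, neg_one_smul])

lemma inner_mem_Ioo_of_perpPart_ne_zero (hw : ‖w‖ = 1) (h : perpPart g w ≠ 0) :
    ⟪g, w⟫ ∈ Set.Ioo (-1) 1 := by
  have hpos : 0 < ‖perpPart g w‖ ^ 2 := by positivity
  rw [norm_perpPart_sq hg hw] at hpos
  constructor <;> nlinarith

lemma sin_arccos_inner (hw : ‖w‖ = 1) : sin (arccos ⟪g, w⟫) = ‖perpPart g w‖ := by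
  rw [sin_arccos, ← norm_perpPart_sq hg hw, sqrt_sq (norm_nonneg _)]

lemma greatCircle_arccos_inner (hw : ‖w‖ = 1) (h : perpPart g w ≠ 0) :
    greatCircle g (polarDir g w) (arccos ⟪g, w⟫) = w := by
  obtain ⟨h1, h2⟩ := inner_mem_Ioo_of_perpPart_ne_zero hg hw h
  rw [greatCircle, cos_arccos h1.le h2.le, sin_arccos_inner hg hw, polarDir, smul_smul,
    mul_inv_cancel₀ (norm_ne_zero_iff.2 h), one_smul, perpPart, add_sub_cancel]

lemma inner_greatCircle (hu : ⟪g, u⟫ = 0) (t : ℝ) : ⟪g, greatCircle g u t⟫ = cos t := by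
  rw [greatCircle, inner_add_right, real_inner_smul_right, real_inner_smul_right,
    real_inner_self_eq_norm_sq, hg, hu]
  ring

lemma norm_greatCircle (hu : ⟪g, u⟫ = 0) (hu1 : ‖u‖ = 1) (t : ℝ) : ‖greatCircle g u t‖ = 1 := by
  have hsq : ‖greatCircle g u t‖ ^ 2 = 1 := by
    rw [greatCircle, norm_add_sq_real, real_inner_smul_left, real_inner_smul_right, hu,
      norm_smul, norm_smul, hg, hu1, Real.norm_eq_abs, Real.norm_eq_abs]
    simp only [mul_zero, mul_one, sq_abs]
    linarith [sin_sq_add_cos_sq t]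
  exact (pow_eq_one_iff_of_nonneg (norm_nonneg _) two_ne_zero).1 hsq

end PolarCoordinates

open Filter Topology

lemma sphInterior_subset (A : Set (EuclideanSpace ℝ (Fin (n + 1)))) : sphInterior n A ⊆ A :=
  fun _ ⟨hxS, _, _, hxU, hUA⟩ => hUA ⟨hxU, hxS⟩

lemma mem_sphInterior_iff {A : Set (EuclideanSpace ℝ (Fin (n + 1)))}
    {x : EuclideanSpace ℝ (Fin (n + 1))} :
    x ∈ sphInterior n A ↔ x ∈ unitSphere n ∧ ∀ᶠ w in 𝓝 x, w ∈ unitSphere n → w ∈ A := by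
  refine and_congr_right fun _ => ⟨fun ⟨U, hU, hxU, hUA⟩ => ?_, fun h => ?_⟩
  · filter_upwards [hU.mem_nhds hxU] with w hwU hwS using hUA ⟨hwU, hwS⟩
  · obtain ⟨U, hUA, hU, hxU⟩ := mem_nhds_iff.1 h
    exact ⟨U, hU, hxU, fun w ⟨hwU, hwS⟩ => hUA hwU hwS⟩

lemma sphGeodesic_self (a : EuclideanSpace ℝ (Fin (n + 1))) : sphGeodesic a a = {a} :=
  if_pos rfl

section Geodesics

variable {g u : EuclideanSpace ℝ (Fin (n + 1))} (hg : ‖g‖ = 1) (hu : ⟪g, u⟫ = 0)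
include hg hu

lemma greatCircle_mem_sphGeodesic {a β : ℝ} (hβ0 : 0 < β) (hβπ : β < π) (ha0 : 0 ≤ a)
    (haβ : a ≤ β) : greatCircle g u a ∈ sphGeodesic g (greatCircle g u β) := by
  have hθ : arccos ⟪g, greatCircle g u β⟫ = β := by
    rw [inner_greatCircle hg hu, arccos_cos hβ0.le hβπ.le]
  have hne : g ≠ greatCircle g u β := by
    intro h
    rw [← h, real_inner_self_eq_norm_sq, hg, one_pow, arccos_one] at hθ
    exact hβ0.ne hθ
  have hsin : sin β ≠ 0 := (sin_pos_of_pos_of_lt_pi hβ0 hβπ).ne'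
  rw [sphGeodesic, if_neg hne, hθ]
  refine ⟨a / β, ⟨div_nonneg ha0 hβ0.le, (div_le_one hβ0).2 haβ⟩, ?_⟩
  rw [show (1 - a / β) * β = β - a by field_simp, div_mul_cancel₀ a hβ0.ne', sin_sub,
    greatCircle, greatCircle]
  match_scalars <;> field_simp
  ring

lemma exists_eq_greatCircle_of_mem_sphGeodesic_neg {α : ℝ} (hα0 : 0 < α) (hαπ : α < π)
    {y : EuclideanSpace ℝ (Fin (n + 1))} (hy : y ∈ sphGeodesic (greatCircle g u α) (-g)) :
    ∃ β ∈ Set.Icc α π, y = greatCircle g u β := by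
  have hθ : arccos ⟪greatCircle g u α, -g⟫ = π - α := by
    rw [inner_neg_right, real_inner_comm, inner_greatCircle hg hu, arccos_neg,
      arccos_cos hα0.le hαπ.le]
  have hne : greatCircle g u α ≠ -g := by
    intro h
    rw [h, inner_neg_neg, real_inner_self_eq_norm_sq, hg, one_pow, arccos_one] at hθ
    linarith
  have hsin : sin α ≠ 0 := (sin_pos_of_pos_of_lt_pi hα0 hαπ).ne'
  rw [sphGeodesic, if_neg hne, hθ] at hy
  obtain ⟨l, ⟨hl0, hl1⟩, rfl⟩ := hy
  obtain ⟨β, hβ⟩ : ∃ β, α + l * (π - α) = β := ⟨_, rfl⟩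
  refine ⟨β, ⟨by nlinarith, by nlinarith⟩, ?_⟩
  rw [show (1 - l) * (π - α) = π - β by linarith, show l * (π - α) = β - α by linarith,
    sin_pi_sub, sin_pi_sub, sin_sub, greatCircle, greatCircle]
  match_scalars <;> field_simp
  ring

end Geodesics

lemma mem_sphInterior_of_greatCircle_mem_sphInterior {A : Set (EuclideanSpace ℝ (Fin (n + 1)))}
    {g x : EuclideanSpace ℝ (Fin (n + 1))} (hg : ‖g‖ = 1)
    (hgStar : ∀ z ∈ A, sphGeodesic g z ⊆ A) (hx : ‖x‖ = 1) (hperp : perpPart g x ≠ 0)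
    {β : ℝ} (hxβ : arccos ⟪g, x⟫ < β) (hβπ : β < π)
    (hβ : greatCircle g (polarDir g x) β ∈ sphInterior n A) : x ∈ sphInterior n A := by
  have hβ0 : 0 < β := (arccos_nonneg _).trans_lt hxβ
  rw [mem_sphInterior_iff] at hβ ⊢
  refine ⟨mem_sphere_zero_iff_norm.2 hx, ?_⟩
  have hcont : ContinuousAt (fun w => greatCircle g (polarDir g w) β) x :=
    continuousAt_const.add ((continuousAt_polarDir hperp).const_smul (sin β))
  have hcone : cos β < ⟪g, x⟫ := by
    have := cos_lt_cos_of_nonneg_of_le_pi (arccos_nonneg _) hβπ.le hxβ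
    obtain ⟨h1, h2⟩ := inner_mem_Ioo_of_perpPart_ne_zero hg hx hperp
    rwa [cos_arccos h1.le h2.le] at this
  filter_upwards [hcont.eventually hβ.2, continuous_perpPart.continuousAt.eventually_ne hperp,
    (continuous_const.inner continuous_id).continuousAt.eventually_const_lt hcone]
    with w hwA hwperp hwcone hwS
  have hw : ‖w‖ = 1 := mem_sphere_zero_iff_norm.1 hwS
  have hu := inner_polarDir (w := w) hg
  have haβ : arccos ⟪g, w⟫ < β := by
    have hw1 : ⟪g, w⟫ ≤ 1 := by simpa [hg, hw] using real_inner_le_norm g w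
    simpa [arccos_cos hβ0.le hβπ.le] using arccos_lt_arccos (neg_one_le_cos β) hwcone hw1
  rw [← greatCircle_arccos_inner hg hw hwperp]
  exact hgStar _
    (hwA (mem_sphere_zero_iff_norm.2 (norm_greatCircle hg hu (norm_polarDir hwperp) β)))
    (greatCircle_mem_sphGeodesic hg hu hβ0 hβπ (arccos_nonneg _) haβ.le)

theorem geodesic_to_antipode_avoids_interior_general (n : ℕ)
    (A : Set (EuclideanSpace ℝ (Fin (n + 1))))
    (g : EuclideanSpace ℝ (Fin (n + 1)))
    (hgNeg : -g ∉ A)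
    (hgStar : ∀ x ∈ A, sphGeodesic g x ⊆ A)
    (hgInt : g ∈ sphInterior n A) :
    ∀ x ∈ sphBoundary n A, sphGeodesic x (-g) ∩ sphInterior n A = ∅ := by
  rintro x ⟨⟨-, hxS⟩, hxA⟩
  refine Set.eq_empty_iff_forall_notMem.2 fun y ⟨hy, hyA⟩ => ?_
  have hg : ‖g‖ = 1 := mem_sphere_zero_iff_norm.1 hgInt.1
  have hx : ‖x‖ = 1 := mem_sphere_zero_iff_norm.1 hxS
  have hyg : y ≠ -g := fun h => hgNeg (h ▸ sphInterior_subset A hyA)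
  have hxg : x ≠ -g := by
    rintro rfl
    exact hyg (by simpa [sphGeodesic_self] using hy)
  have hperp := perpPart_ne_zero hg hx (by rintro rfl; exact hxA hgInt) hxg
  obtain ⟨h1, h2⟩ := inner_mem_Ioo_of_perpPart_ne_zero hg hx hperp
  rw [← greatCircle_arccos_inner hg hx hperp] at hy
  obtain ⟨β, ⟨hαβ, hβπ⟩, rfl⟩ := exists_eq_greatCircle_of_mem_sphGeodesic_neg hg
    (inner_polarDir hg) (arccos_pos.2 h2) (arccos_lt_pi.2 h1) hy
  have hαβ' : arccos ⟪g, x⟫ < β := hαβ.lt_of_ne <| by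
    rintro rfl
    exact hxA (greatCircle_arccos_inner hg hx hperp ▸ hyA)
  have hβπ' : β < π := hβπ.lt_of_ne <| by
    rintro rfl
    exact hyg greatCircle_pi
  exact hxA (mem_sphInterior_of_greatCircle_mem_sphInterior hg hgStar hx hperp hαβ' hβπ' hyA)

/-- Lemma 1: Let `A ⊂ Sⁿ` be star-shaped on `Sⁿ` with center `g ∈ σ(A)` lying in the
interior of `A` on `Sⁿ` (where `-g ∉ A`). Then for every `x ∈ ∂A`, the geodesic
`G(x, -g)` does not intersect the interior `A°`. -/
theorem geodesic_to_antipode_avoids_interior (n : ℕ)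
    (A : Set (EuclideanSpace ℝ (Fin (n + 1)))) (hA : A ⊆ unitSphere n)
    (g : EuclideanSpace ℝ (Fin (n + 1)))
    (hgA : g ∈ A) (hgNeg : -g ∉ A)
    (hgStar : ∀ x ∈ A, sphGeodesic g x ⊆ A)
    (hgInt : g ∈ sphInterior n A) :
    ∀ x ∈ sphBoundary n A, sphGeodesic x (-g) ∩ sphInterior n A = ∅ :=
  geodesic_to_antipode_avoids_interior_general n A g hgNeg hgStar hgInt
end

section
/- Let g_i, x_d, x ∈ S^n with P(g_i)x ≠ 0 and P(g_i)x_d ≠ 0, where P(g) = I - g gᵀ. Define w(x) = ‖P(g_i)x‖² P(g_i)x_d - (x_dᵀP(g_i)x) P(g_i)x. Then w(x)ᵀ P(x) x_d = ‖P(g_i)x‖²‖P(g_i)x_d‖² - ((P(g_i)x)ᵀ P(g_i)x_d)², which is nonnegative by Cauchy–Schwarz. -/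
open scoped RealInnerProductSpace

/-- Let `gᵢ, x_d, x ∈ Sⁿ` with `P(gᵢ)x ≠ 0` and `P(gᵢ)x_d ≠ 0`, where
`P(g) v = v - ⟪g, v⟫ g` (i.e. `I - g gᵀ`). For
`w(x) = ‖P(gᵢ)x‖² P(gᵢ)x_d - (x_dᵀ P(gᵢ) x) P(gᵢ)x`, one has
`w(x)ᵀ P(x) x_d = ‖P(gᵢ)x‖²‖P(gᵢ)x_d‖² - ((P(gᵢ)x)ᵀ P(gᵢ)x_d)² ≥ 0`. -/
theorem w_inner_Px_xd (n : ℕ)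
    (gi xd x : EuclideanSpace ℝ (Fin (n + 1)))
    (hgi : ‖gi‖ = 1) (hxd : ‖xd‖ = 1) (hx : ‖x‖ = 1)
    (hPx : x - ⟪gi, x⟫ • gi ≠ 0) (hPxd : xd - ⟪gi, xd⟫ • gi ≠ 0) :
    ⟪‖x - ⟪gi, x⟫ • gi‖ ^ 2 • (xd - ⟪gi, xd⟫ • gi)
        - ⟪xd, x - ⟪gi, x⟫ • gi⟫ • (x - ⟪gi, x⟫ • gi),
      xd - ⟪x, xd⟫ • x⟫
      = ‖x - ⟪gi, x⟫ • gi‖ ^ 2 * ‖xd - ⟪gi, xd⟫ • gi‖ ^ 2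
        - ⟪x - ⟪gi, x⟫ • gi, xd - ⟪gi, xd⟫ • gi⟫ ^ 2 ∧
    0 ≤ ‖x - ⟪gi, x⟫ • gi‖ ^ 2 * ‖xd - ⟪gi, xd⟫ • gi‖ ^ 2
        - ⟪x - ⟪gi, x⟫ • gi, xd - ⟪gi, xd⟫ • gi⟫ ^ 2 := by
  constructor
  · simp only [← real_inner_self_eq_norm_sq]
    have hg2 : ⟪gi, gi⟫ = 1 := by
      rw [real_inner_self_eq_norm_sq, hgi]; norm_num
    have hx2 : ⟪x, x⟫ = 1 := by
      rw [real_inner_self_eq_norm_sq, hx]; norm_num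
    simp only [inner_sub_left, inner_sub_right, inner_smul_left, inner_smul_right,
      RCLike.ofReal_real_eq_id, id_eq, starRingEnd_apply, star_trivial, hg2, hx2, real_inner_comm x gi,
      real_inner_comm xd gi, real_inner_comm xd x]
    ring
  · have h := abs_real_inner_le_norm (x - ⟪gi, x⟫ • gi) (xd - ⟪gi, xd⟫ • gi)
    have h2 := abs_nonneg ⟪x - ⟪gi, x⟫ • gi, xd - ⟪gi, xd⟫ • gi⟫
    nlinarith [sq_abs ⟪x - ⟪gi, x⟫ • gi, xd - ⟪gi, xd⟫ • gi⟫]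
end
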